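/- For continuous P, b > 0, and n ∈ ℕ with n ≥ 1 and a = n·b, the telescoping identity holds: P̄^a(x) − P̄^{a+b}(x) = Σ_{i=1}^n (i·b/(n(n+1)))·(d/dx P̄^{b,b})(x − (i−1)b), where P̄^{b,b}(x) := (1/b)∫_{x-b}^x P̄^b(s) ds is the double right-endpoint average over window b. -/

import Mathlib

open MeasureTheory

noncomputable def mavg (P : ℝ → ℝ) (t x : ℝ) : ℝ := (1 / t) * ∫ s in (x - t)..x, P s


noncomputable def davg (P : ℝ → ℝ) (a x : ℝ) : ℝ := (1 / a) * ∫ s in (x - a)..x, mavg P a s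

/-!
Splitting the window `[x - n b, x]` into `n` blocks of length `b` writes `P̄^{nb}(x)` as the mean
of the `n` values `g k = P̄^b(x - k b)`, `k < n`. The difference of the means of the first `n` and
first `n + 1` values is, by summation by parts, `Σ i (g (i-1) - g i) / (n (n+1))`, and
`g (i-1) - g i = b · (P̄^{b,b})'(x - (i-1) b)` because `P̄^{b,b}` is the `b`-average of `P̄^b`.
-/

section Averages

variable {P : ℝ → ℝ}

theorem hasDerivAt_mavg (hP : Continuous P) (t x : ℝ) :
    HasDerivAt (mavg P t) ((P x - P (x - t)) / t) x := by
  have hF : ∀ y, HasDerivAt (fun y => ∫ s in (0 : ℝ)..y, P s) (P y) y := fun y =>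
    (hP.integral_hasStrictDerivAt 0 y).hasDerivAt
  have hsplit : mavg P t = fun y => (1 / t) *
      ((∫ s in (0 : ℝ)..y, P s) - ∫ s in (0 : ℝ)..(y - t), P s) := by
    funext y
    rw [mavg, intervalIntegral.integral_interval_sub_left
      (hP.intervalIntegrable _ _) (hP.intervalIntegrable _ _)]
  have h : HasDerivAt (fun y => (1 / t) *
      ((∫ s in (0 : ℝ)..y, P s) - ∫ s in (0 : ℝ)..(y - t), P s)) ((1 / t) * (P x - P (x - t))) x :=
    ((hF x).sub ((hF (x - t)).comp_sub_const x t)).const_mul _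
  rw [hsplit]
  rwa [one_div_mul_eq_div] at h

theorem continuous_mavg (hP : Continuous P) (t : ℝ) : Continuous (mavg P t) :=
  continuous_iff_continuousAt.2 fun x => (hasDerivAt_mavg hP t x).continuousAt

theorem davg_eq_mavg_mavg (t : ℝ) : davg P t = mavg (mavg P t) t := rfl

theorem deriv_davg (hP : Continuous P) (t y : ℝ) :
    deriv (davg P t) y = (mavg P t y - mavg P t (y - t)) / t := by
  rw [davg_eq_mavg_mavg]
  exact (hasDerivAt_mavg (continuous_mavg hP t) t y).deriv

theorem integral_sub_nat_mul_eq_sum (hP : Continuous P) (b x : ℝ) (n : ℕ) :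
    ∫ s in (x - n * b)..x, P s
      = ∑ k ∈ Finset.range n, ∫ s in (x - k * b - b)..(x - k * b), P s := by
  induction n with
  | zero => simp
  | succ n ih =>
    rw [Finset.sum_range_succ, ← ih, add_comm, ← intervalIntegral.integral_add_adjacent_intervals
      (hP.intervalIntegrable _ (x - n * b)) (hP.intervalIntegrable _ _)]
    push_cast
    ring_nf

theorem mavg_nat_mul (hP : Continuous P) (b x : ℝ) (n : ℕ) :
    mavg P (n * b) x = (1 / n) * ∑ k ∈ Finset.range n, mavg P b (x - k * b) := by
  simp only [mavg]
  rw [integral_sub_nat_mul_eq_sum hP, ← Finset.mul_sum]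
  ring

end Averages

theorem sum_Icc_mul_sub_eq {R : Type*} [CommRing R] (g : ℕ → R) (n : ℕ) :
    ∑ i ∈ Finset.Icc 1 n, (i : R) * (g (i - 1) - g i)
      = ∑ k ∈ Finset.range n, g k - n * g n := by
  induction n with
  | zero => simp
  | succ n ih =>
    rw [Finset.sum_Icc_succ_top (Nat.le_add_left 1 n), ih, Finset.sum_range_succ,
      Nat.add_sub_cancel]
    push_cast
    ring

theorem mean_range_sub_mean_range_succ {K : Type*} [Field K] [CharZero K] (g : ℕ → K)
    {n : ℕ} (hn : n ≠ 0) :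
    (1 / n) * ∑ k ∈ Finset.range n, g k - (1 / (n + 1 : ℕ)) * ∑ k ∈ Finset.range (n + 1), g k
      = ∑ i ∈ Finset.Icc 1 n, (i : K) / (n * (n + 1)) * (g (i - 1) - g i) := by
  have hsum := sum_Icc_mul_sub_eq g n
  simp only [div_mul_eq_mul_div, ← Finset.sum_div]
  rw [hsum, Finset.sum_range_succ]
  field_simp
  push_cast
  ring

theorem stmt14 (P : ℝ → ℝ) (hP : Continuous P) (b : ℝ) (hb : 0 < b)
    (n : ℕ) (hn : 1 ≤ n) (a : ℝ) (ha : a = n * b) (x : ℝ) :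
    mavg P a x - mavg P (a + b) x
      = ∑ i ∈ Finset.Icc 1 n,
          ((i : ℝ) * b / ((n : ℝ) * ((n : ℝ) + 1)))
            * deriv (davg P b) (x - ((i : ℝ) - 1) * b) := by
  have hab : a + b = (n + 1 : ℕ) * b := by rw [ha]; push_cast; ring
  rw [hab, ha, mavg_nat_mul hP, mavg_nat_mul hP,
    mean_range_sub_mean_range_succ (fun k => mavg P b (x - k * b)) (by omega)]
  refine Finset.sum_congr rfl fun i hi => ?_
  have hi1 : ((i - 1 : ℕ) : ℝ) = i - 1 := by
    rw [Nat.cast_sub (Finset.mem_Icc.1 hi).1, Nat.cast_one]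
  rw [deriv_davg hP, hi1, show x - ((i : ℝ) - 1) * b - b = x - i * b by ring]
  field_simp [hb.ne']
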